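/- (Residue of det Ω_κ, rank-one pole.) Let Ω_κ({z},{λ}|{z}) be the N×N matrix with entries (Ω_κ)_{jk} = a(λₖ)·t(zⱼ,λₖ)·Π_{a=1}^{N} sinh(z_a−λₖ+η) − κ·d(λₖ)·t(λₖ,zⱼ)·Π_{a=1}^{N} sinh(z_a−λₖ−η). As a function of z_a, det_N Ω_κ has a simple pole at z_a = λ_b, and its residue there equals (−1)^{a+b}·Y_κ(λ_b | {z without z_a} ∪ {λ_b}) · det_{N−1} Ω_κ({z without z_a}, {λ without λ_b} | {z without z_a} ∪ {λ_b}), where Y_κ(μ|{w}) = a(μ)·Π_{w∈{w}} sinh(w−μ+η) + κ·d(μ)·Π_{w∈{w}} sinh(w−μ−η). -/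
import Mathlib

open Complex Filter Topology

/-- `t(λ,μ) = sinh η / (sinh(λ-μ) · sinh(λ-μ+η))`. -/
noncomputable def tfun (η lam mu : ℂ) : ℂ :=
  Complex.sinh η / (Complex.sinh (lam - mu) * Complex.sinh (lam - mu + η))

noncomputable def Amat (M : ℕ) (η κ : ℂ) (a d : ℂ → ℂ) (z lam : Fin (M + 1) → ℂ)
    (ia : Fin (M + 1)) (w : ℂ) : Matrix (Fin (M + 1)) (Fin (M + 1)) ℂ :=
  Matrix.of fun j k : Fin (M + 1) =>
    a (lam k) * tfun η (Function.update z ia w j) (lam k) *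
        (∏ c : Fin (M + 1), Complex.sinh (Function.update z ia w c - lam k + η))
      - κ * d (lam k) * tfun η (lam k) (Function.update z ia w j) *
        (∏ c : Fin (M + 1), Complex.sinh (Function.update z ia w c - lam k - η))


lemma cont_sinh_rp (p q : ℂ) : Continuous fun w : ℂ => Complex.sinh (w - p + q) :=
  Complex.continuous_sinh.comp ((continuous_sub_right p).add continuous_const)

lemma cont_sinh_rm (p q : ℂ) : Continuous fun w : ℂ => Complex.sinh (w - p - q) :=
  Complex.continuous_sinh.comp ((continuous_sub_right p).sub continuous_const)

lemma cont_sinh_lp (p q : ℂ) : Continuous fun w : ℂ => Complex.sinh (p - w + q) :=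
  Complex.continuous_sinh.comp ((continuous_sub_left p).add continuous_const)

lemma tendsto_div_sinh : Tendsto (fun x : ℂ => x / Complex.sinh x) (𝓝[≠] (0:ℂ)) (𝓝 1) := by
  have h := Complex.hasDerivAt_sinh (0:ℂ)
  rw [hasDerivAt_iff_tendsto_slope] at h
  have h2 : Tendsto (fun x : ℂ => Complex.sinh x / x) (𝓝[≠] (0:ℂ)) (𝓝 1) := by
    simpa [slope_fun_def_field, Complex.cosh_zero] using h
  have := h2.inv₀ one_ne_zero
  simpa [inv_div] using this

lemma aux_sub (L : ℂ) : Tendsto (fun w : ℂ => w - L) (𝓝[≠] L) (𝓝[≠] (0:ℂ)) := by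
  rw [tendsto_nhdsWithin_iff]
  constructor
  · have h0 : Tendsto (fun w : ℂ => w - L) (𝓝 L) (𝓝 (0:ℂ)) := by
      simpa using (continuous_sub_right (L:ℂ)).tendsto L
    exact h0.mono_left nhdsWithin_le_nhds
  · filter_upwards [self_mem_nhdsWithin] with w hw
    simpa [Set.mem_compl_iff, sub_eq_zero] using hw

lemma aux_sub' (L : ℂ) : Tendsto (fun w : ℂ => L - w) (𝓝[≠] L) (𝓝[≠] (0:ℂ)) := by
  rw [tendsto_nhdsWithin_iff]
  constructor
  · have h0 : Tendsto (fun w : ℂ => L - w) (𝓝 L) (𝓝 (0:ℂ)) := by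
      simpa using (continuous_sub_left (L:ℂ)).tendsto L
    exact h0.mono_left nhdsWithin_le_nhds
  · filter_upwards [self_mem_nhdsWithin] with w hw
    simp only [Set.mem_compl_iff, Set.mem_singleton_iff, sub_eq_zero] at *
    exact fun h => hw h.symm

lemma tfR (η L : ℂ) (hη : Complex.sinh η ≠ 0) :
    Tendsto (fun w : ℂ => (w - L) * tfun η w L) (𝓝[≠] L) (𝓝 1) := by
  have h1 : Tendsto (fun w : ℂ => (w - L) / Complex.sinh (w - L)) (𝓝[≠] L) (𝓝 1) :=
    tendsto_div_sinh.comp (aux_sub L)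
  have h2 : Tendsto (fun w : ℂ => Complex.sinh η / Complex.sinh (w - L + η)) (𝓝[≠] L) (𝓝 1) := by
    have hc : ContinuousAt (fun w : ℂ => Complex.sinh η / Complex.sinh (w - L + η)) L := by
      apply ContinuousAt.div continuousAt_const
      · exact (cont_sinh_rp L η).continuousAt
      · simpa using hη
    have := hc.tendsto.mono_left (nhdsWithin_le_nhds (s := {L}ᶜ))
    simpa [div_self hη] using this
  have := h1.mul h2
  rw [one_mul] at this
  refine this.congr fun w => ?_
  simp only [tfun]; ring

lemma tfL (η L : ℂ) (hη : Complex.sinh η ≠ 0) :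
    Tendsto (fun w : ℂ => (w - L) * tfun η L w) (𝓝[≠] L) (𝓝 (-1)) := by
  have h1 : Tendsto (fun w : ℂ => (L - w) / Complex.sinh (L - w)) (𝓝[≠] L) (𝓝 1) :=
    tendsto_div_sinh.comp (aux_sub' L)
  have h2 : Tendsto (fun w : ℂ => Complex.sinh η / Complex.sinh (L - w + η)) (𝓝[≠] L) (𝓝 1) := by
    have hc : ContinuousAt (fun w : ℂ => Complex.sinh η / Complex.sinh (L - w + η)) L := by
      apply ContinuousAt.div continuousAt_const
      · exact (cont_sinh_lp L η).continuousAt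
      · simpa using hη
    have := hc.tendsto.mono_left (nhdsWithin_le_nhds (s := {L}ᶜ))
    simpa [div_self hη] using this
  have := ((h1.mul h2).neg)
  rw [one_mul] at this
  refine this.congr fun w => ?_
  simp only [tfun]; ring

/-- Residue of `det_N Ω_κ({z},{λ}|{z})` at the simple pole `z_a = λ_b`
(here `N = M + 1`).  The variable `z_a` is replaced by `w` via `Function.update`,
and the residue equals
`(-1)^{a+b} · Y_κ(λ_b | {z ∖ z_a} ∪ {λ_b}) ·
  det_{N-1} Ω_κ({z ∖ z_a}, {λ ∖ λ_b} | {z ∖ z_a} ∪ {λ_b})`. -/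
theorem det_Omega_residue (M : ℕ) (η κ : ℂ) (a d : ℂ → ℂ)
    (ha : Differentiable ℂ a) (hd : Differentiable ℂ d)
    (z lam : Fin (M + 1) → ℂ) (ia ib : Fin (M + 1))
    (hη : Complex.sinh η ≠ 0)
    (hgen1 : ∀ j k : Fin (M + 1), j ≠ ia →
      Complex.sinh (z j - lam k) ≠ 0 ∧ Complex.sinh (z j - lam k + η) ≠ 0 ∧
        Complex.sinh (z j - lam k - η) ≠ 0)
    (hgen2 : ∀ k : Fin (M + 1), k ≠ ib →
      Complex.sinh (lam ib - lam k) ≠ 0 ∧ Complex.sinh (lam ib - lam k + η) ≠ 0 ∧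
        Complex.sinh (lam ib - lam k - η) ≠ 0) :
    Filter.Tendsto
      (fun w : ℂ => (w - lam ib) *
        Matrix.det (Matrix.of fun j k : Fin (M + 1) =>
          a (lam k) * tfun η (Function.update z ia w j) (lam k) *
              (∏ c : Fin (M + 1), Complex.sinh (Function.update z ia w c - lam k + η))
            - κ * d (lam k) * tfun η (lam k) (Function.update z ia w j) *
              (∏ c : Fin (M + 1), Complex.sinh (Function.update z ia w c - lam k - η))))
      (nhdsWithin (lam ib) {lam ib}ᶜ)
      (nhds ((-1 : ℂ) ^ ((ia : ℕ) + (ib : ℕ)) *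
        (a (lam ib) * (Complex.sinh η *
            ∏ c : Fin M, Complex.sinh (z (ia.succAbove c) - lam ib + η))
          + κ * d (lam ib) * (Complex.sinh (-η) *
            ∏ c : Fin M, Complex.sinh (z (ia.succAbove c) - lam ib - η))) *
        Matrix.det (Matrix.of fun j k : Fin M =>
          a (lam (ib.succAbove k)) *
              tfun η (z (ia.succAbove j)) (lam (ib.succAbove k)) *
              (Complex.sinh (lam ib - lam (ib.succAbove k) + η) *
                ∏ c : Fin M, Complex.sinh (z (ia.succAbove c) - lam (ib.succAbove k) + η))
            - κ * d (lam (ib.succAbove k)) *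
              tfun η (lam (ib.succAbove k)) (z (ia.succAbove j)) *
              (Complex.sinh (lam ib - lam (ib.succAbove k) - η) *
                ∏ c : Fin M, Complex.sinh (z (ia.succAbove c) - lam (ib.succAbove k) - η))))) := by
  classical
  -- splitting the products over `Fin (M+1)` at index `ia`
  have hPp : ∀ (w μ : ℂ), (∏ c : Fin (M+1), Complex.sinh (Function.update z ia w c - μ + η))
      = Complex.sinh (w - μ + η) * ∏ c : Fin M, Complex.sinh (z (ia.succAbove c) - μ + η) := by
    intro w μ
    rw [Fin.prod_univ_succAbove (fun c => Complex.sinh (Function.update z ia w c - μ + η)) ia]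
    congr 1
    · rw [Function.update_self]
    · exact Finset.prod_congr rfl fun c _ => by rw [Function.update_of_ne (Fin.succAbove_ne ia c)]
  have hPm : ∀ (w μ : ℂ), (∏ c : Fin (M+1), Complex.sinh (Function.update z ia w c - μ - η))
      = Complex.sinh (w - μ - η) * ∏ c : Fin M, Complex.sinh (z (ia.succAbove c) - μ - η) := by
    intro w μ
    rw [Fin.prod_univ_succAbove (fun c => Complex.sinh (Function.update z ia w c - μ - η)) ia]
    congr 1
    · rw [Function.update_self]
    · exact Finset.prod_congr rfl fun c _ => by rw [Function.update_of_ne (Fin.succAbove_ne ia c)]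
  -- row `ia` of the matrix
  have hrow : ∀ (w : ℂ) (k : Fin (M+1)), Amat M η κ a d z lam ia w ia k
      = a (lam k) * tfun η w (lam k) *
          (Complex.sinh (w - lam k + η) * ∏ c : Fin M, Complex.sinh (z (ia.succAbove c) - lam k + η))
        - κ * d (lam k) * tfun η (lam k) w *
          (Complex.sinh (w - lam k - η) * ∏ c : Fin M, Complex.sinh (z (ia.succAbove c) - lam k - η)) := by
    intro w k
    simp only [Amat, Matrix.of_apply, Function.update_self, hPp, hPm]
  -- continuity of the rows other than `ia`
  have hAcont : ∀ (j : Fin M) (k : Fin (M+1)),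
      Continuous (fun w : ℂ => Amat M η κ a d z lam ia w (ia.succAbove j) k) := by
    intro j k
    have hup : ∀ w : ℂ, Function.update z ia w (ia.succAbove j) = z (ia.succAbove j) :=
      fun w => Function.update_of_ne (Fin.succAbove_ne ia j) _ _
    have hfun : (fun w : ℂ => Amat M η κ a d z lam ia w (ia.succAbove j) k)
        = fun w : ℂ => a (lam k) * tfun η (z (ia.succAbove j)) (lam k) *
            (Complex.sinh (w - lam k + η) * ∏ c : Fin M, Complex.sinh (z (ia.succAbove c) - lam k + η))
          - κ * d (lam k) * tfun η (lam k) (z (ia.succAbove j)) *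
            (Complex.sinh (w - lam k - η) * ∏ c : Fin M, Complex.sinh (z (ia.succAbove c) - lam k - η)) := by
      funext w
      simp only [Amat, Matrix.of_apply, hup, hPp, hPm]
    rw [hfun]
    exact ((continuous_const.mul ((cont_sinh_rp (lam k) η).mul continuous_const)).sub
      (continuous_const.mul ((cont_sinh_rm (lam k) η).mul continuous_const)))
  -- convergence of the minors
  have hD : ∀ k : Fin (M+1),
      Tendsto (fun w : ℂ => ((Amat M η κ a d z lam ia w).submatrix ia.succAbove k.succAbove).det)
        (𝓝[≠] lam ib)
        (𝓝 (((Amat M η κ a d z lam ia (lam ib)).submatrix ia.succAbove k.succAbove).det)) := by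
    intro k
    have hc : Continuous (fun w : ℂ =>
        ((Amat M η κ a d z lam ia w).submatrix ia.succAbove k.succAbove)) :=
      continuous_matrix fun i j => hAcont i (k.succAbove j)
    exact ((hc.matrix_det).tendsto (lam ib)).mono_left nhdsWithin_le_nhds
  -- entries of row ia, k ≠ ib : no pole
  have hE0 : ∀ k : Fin (M+1), k ≠ ib →
      Tendsto (fun w : ℂ => (w - lam ib) * Amat M η κ a d z lam ia w ia k)
        (𝓝[≠] lam ib) (𝓝 0) := by
    intro k hk
    obtain ⟨h1, h2, h3⟩ := hgen2 k hk
    have ht1 : ContinuousAt (fun w : ℂ => tfun η w (lam k)) (lam ib) := by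
      apply ContinuousAt.div continuousAt_const
      · exact ((Complex.continuous_sinh.comp (continuous_sub_right _)).mul
          (cont_sinh_rp (lam k) η)).continuousAt
      · exact mul_ne_zero h1 h2
    have hne1 : Complex.sinh (lam k - lam ib) ≠ 0 := by
      rw [← neg_sub (lam ib) (lam k), Complex.sinh_neg]
      exact neg_ne_zero.mpr h1
    have hne2 : Complex.sinh (lam k - lam ib + η) ≠ 0 := by
      have he : lam k - lam ib + η = -(lam ib - lam k - η) := by ring
      rw [he, Complex.sinh_neg]
      exact neg_ne_zero.mpr h3
    have ht2 : ContinuousAt (fun w : ℂ => tfun η (lam k) w) (lam ib) := by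
      apply ContinuousAt.div continuousAt_const
      · exact ((Complex.continuous_sinh.comp (continuous_sub_left _)).mul
          (cont_sinh_lp (lam k) η)).continuousAt
      · exact mul_ne_zero hne1 hne2
    have hcont : ContinuousAt (fun w : ℂ => Amat M η κ a d z lam ia w ia k) (lam ib) := by
      have hfun : (fun w : ℂ => Amat M η κ a d z lam ia w ia k)
          = fun w : ℂ => a (lam k) * tfun η w (lam k) *
              (Complex.sinh (w - lam k + η) * ∏ c : Fin M, Complex.sinh (z (ia.succAbove c) - lam k + η))
            - κ * d (lam k) * tfun η (lam k) w *
              (Complex.sinh (w - lam k - η) * ∏ c : Fin M, Complex.sinh (z (ia.succAbove c) - lam k - η)) := by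
        funext w; exact hrow w k
      rw [hfun]
      apply ContinuousAt.sub
      · exact (continuousAt_const.mul ht1).mul
          (((cont_sinh_rp (lam k) η).mul continuous_const).continuousAt)
      · exact (continuousAt_const.mul ht2).mul
          (((cont_sinh_rm (lam k) η).mul continuous_const).continuousAt)
    have hc0 : Tendsto (fun w : ℂ => w - lam ib) (𝓝[≠] lam ib) (𝓝 0) :=
      (aux_sub (lam ib)).mono_right nhdsWithin_le_nhds
    have := hc0.mul (hcont.tendsto.mono_left (nhdsWithin_le_nhds (s := {lam ib}ᶜ)))
    simpa using this
  -- the singular entry (ia, ib)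
  have hsp : Tendsto (fun w : ℂ => Complex.sinh (w - lam ib + η) *
        ∏ c : Fin M, Complex.sinh (z (ia.succAbove c) - lam ib + η)) (𝓝[≠] lam ib)
      (𝓝 (Complex.sinh η * ∏ c : Fin M, Complex.sinh (z (ia.succAbove c) - lam ib + η))) := by
    have hc : Continuous (fun w : ℂ => Complex.sinh (w - lam ib + η) *
        ∏ c : Fin M, Complex.sinh (z (ia.succAbove c) - lam ib + η)) :=
      (cont_sinh_rp (lam ib) η).mul continuous_const
    have := (hc.tendsto (lam ib)).mono_left (nhdsWithin_le_nhds (s := {lam ib}ᶜ))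
    simpa using this
  have hsm : Tendsto (fun w : ℂ => Complex.sinh (w - lam ib - η) *
        ∏ c : Fin M, Complex.sinh (z (ia.succAbove c) - lam ib - η)) (𝓝[≠] lam ib)
      (𝓝 (Complex.sinh (-η) * ∏ c : Fin M, Complex.sinh (z (ia.succAbove c) - lam ib - η))) := by
    have hc : Continuous (fun w : ℂ => Complex.sinh (w - lam ib - η) *
        ∏ c : Fin M, Complex.sinh (z (ia.succAbove c) - lam ib - η)) :=
      (cont_sinh_rm (lam ib) η).mul continuous_const
    have := (hc.tendsto (lam ib)).mono_left (nhdsWithin_le_nhds (s := {lam ib}ᶜ))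
    simpa [sub_sub] using this
  have hEib : Tendsto (fun w : ℂ => (w - lam ib) * Amat M η κ a d z lam ia w ia ib)
      (𝓝[≠] lam ib)
      (𝓝 (a (lam ib) * (Complex.sinh η * ∏ c : Fin M, Complex.sinh (z (ia.succAbove c) - lam ib + η))
          + κ * d (lam ib) * (Complex.sinh (-η) * ∏ c : Fin M, Complex.sinh (z (ia.succAbove c) - lam ib - η)))) := by
    have base := ((tendsto_const_nhds (x := a (lam ib))).mul ((tfR η (lam ib) hη).mul hsp)).sub
      ((tendsto_const_nhds (x := κ * d (lam ib))).mul ((tfL η (lam ib) hη).mul hsm))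
    have hval : a (lam ib) * (1 * (Complex.sinh η * ∏ c : Fin M, Complex.sinh (z (ia.succAbove c) - lam ib + η)))
        - κ * d (lam ib) * ((-1) * (Complex.sinh (-η) * ∏ c : Fin M, Complex.sinh (z (ia.succAbove c) - lam ib - η)))
        = a (lam ib) * (Complex.sinh η * ∏ c : Fin M, Complex.sinh (z (ia.succAbove c) - lam ib + η))
          + κ * d (lam ib) * (Complex.sinh (-η) * ∏ c : Fin M, Complex.sinh (z (ia.succAbove c) - lam ib - η)) := by
      ring
    rw [hval] at base
    refine base.congr fun w => ?_
    rw [hrow w ib]; ring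
  -- Laplace expansion along row ia
  have expand : ∀ w : ℂ, (w - lam ib) * (Amat M η κ a d z lam ia w).det
      = ∑ k : Fin (M+1), (-1:ℂ) ^ ((ia : ℕ) + (k : ℕ)) *
          ((w - lam ib) * Amat M η κ a d z lam ia w ia k) *
          ((Amat M η κ a d z lam ia w).submatrix ia.succAbove k.succAbove).det := by
    intro w
    rw [Matrix.det_succ_row (Amat M η κ a d z lam ia w) ia, Finset.mul_sum]
    exact Finset.sum_congr rfl fun k _ => by ring
  -- the limit of each summand
  have hsubm : (Amat M η κ a d z lam ia (lam ib)).submatrix ia.succAbove ib.succAbove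
      = Matrix.of (fun j k : Fin M =>
          a (lam (ib.succAbove k)) *
              tfun η (z (ia.succAbove j)) (lam (ib.succAbove k)) *
              (Complex.sinh (lam ib - lam (ib.succAbove k) + η) *
                ∏ c : Fin M, Complex.sinh (z (ia.succAbove c) - lam (ib.succAbove k) + η))
            - κ * d (lam (ib.succAbove k)) *
              tfun η (lam (ib.succAbove k)) (z (ia.succAbove j)) *
              (Complex.sinh (lam ib - lam (ib.succAbove k) - η) *
                ∏ c : Fin M, Complex.sinh (z (ia.succAbove c) - lam (ib.succAbove k) - η))) := by
    ext j k
    simp only [Matrix.submatrix_apply, Amat, Matrix.of_apply, hPp, hPm,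
      Function.update_of_ne (Fin.succAbove_ne ia j)]
  have hterm : ∀ k : Fin (M+1),
      Tendsto (fun w : ℂ => (-1:ℂ) ^ ((ia : ℕ) + (k : ℕ)) *
          ((w - lam ib) * Amat M η κ a d z lam ia w ia k) *
          ((Amat M η κ a d z lam ia w).submatrix ia.succAbove k.succAbove).det)
        (𝓝[≠] lam ib)
        (𝓝 (if k = ib then
          (-1 : ℂ) ^ ((ia : ℕ) + (ib : ℕ)) *
            (a (lam ib) * (Complex.sinh η *
                ∏ c : Fin M, Complex.sinh (z (ia.succAbove c) - lam ib + η))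
              + κ * d (lam ib) * (Complex.sinh (-η) *
                ∏ c : Fin M, Complex.sinh (z (ia.succAbove c) - lam ib - η))) *
            Matrix.det (Matrix.of fun j k : Fin M =>
              a (lam (ib.succAbove k)) *
                  tfun η (z (ia.succAbove j)) (lam (ib.succAbove k)) *
                  (Complex.sinh (lam ib - lam (ib.succAbove k) + η) *
                    ∏ c : Fin M, Complex.sinh (z (ia.succAbove c) - lam (ib.succAbove k) + η))
                - κ * d (lam (ib.succAbove k)) *
                  tfun η (lam (ib.succAbove k)) (z (ia.succAbove j)) *
                  (Complex.sinh (lam ib - lam (ib.succAbove k) - η) *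
                    ∏ c : Fin M, Complex.sinh (z (ia.succAbove c) - lam (ib.succAbove k) - η)))
          else 0)) := by
    intro k
    by_cases hk : k = ib
    · subst hk
      rw [if_pos rfl]
      have hDib := hD k
      rw [hsubm] at hDib
      exact (tendsto_const_nhds.mul hEib).mul hDib
    · rw [if_neg hk]
      have hlim := ((tendsto_const_nhds (x := (-1:ℂ) ^ ((ia : ℕ) + (k : ℕ)))).mul (hE0 k hk)).mul (hD k)
      simpa using hlim
  have hsum := tendsto_finset_sum Finset.univ (fun k _ => hterm k)
  simp only [Finset.sum_ite_eq', Finset.mem_univ, if_true] at hsum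
  exact hsum.congr fun w => (expand w).symm
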